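/- arXiv:1805.08749 — 4 statements merged into one kernel-verified Lean document; each statement's English description precedes it below -/
import Mathlib

section
/- Let h(x) = max_{i ∈ [m]} (b_i + ⟨c_i, x⟩) be a tropical polynomial on ℝⁿ with pairwise distinct points (b_i, c_i) ∈ ℝ^{1+n}, and let N(h) = conv{(b_i, c_i) : i ∈ [m]}. Then for each index i, there exists x ∈ ℝⁿ such that b_i + ⟨c_i, x⟩ > b_j + ⟨c_j, x⟩ for all j ≠ i (i.e., term i defines a linear region of h) if and only if (b_i, c_i) is a vertex of N(h) lying on the upper hull N^max(h). In particular, the linear regions of h are in bijection with the vertices on the upper hull of its Newton polytope. -/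
open scoped RealInnerProductSpace

/-- The upper hull of a set `P ⊆ ℝ^{1+n}` (coordinates written `(λ, x)`):
`P^max = {(λ, x) ∈ P : (t, x) ∈ P ⇒ t ≤ λ}`. -/
def upperHull {n : ℕ} (P : Set (ℝ × EuclideanSpace ℝ (Fin n))) :
    Set (ℝ × EuclideanSpace ℝ (Fin n)) :=
  {p ∈ P | ∀ t : ℝ, (t, p.2) ∈ P → t ≤ p.1}

/-! Term `i` is the unique maximiser at `x` exactly when the linear functional
`(λ, y) ↦ λ + ⟪y, x⟫` attains its maximum over the Newton polytope only at `(bᵢ, cᵢ)`: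
then `(bᵢ, cᵢ)` is an exposed, hence extreme, point, and a functional with positive
`λ`-coefficient can only be maximal on the upper hull. Conversely, if `(bᵢ, cᵢ)` is
extreme and on the upper hull, then it is not in the convex hull of the other points
together with `(bᵢ - 1, cᵢ)`. A functional strictly separating it from that compact set
has positive `λ`-coefficient, because it separates `(bᵢ, cᵢ)` from `(bᵢ - 1, cᵢ)`. After
normalisation it is, by the Riesz representation, `(λ, y) ↦ λ + ⟪y, x⟫` for some `x`. -/

open Set

section Convex

variable {𝕜 E : Type*} [Field 𝕜] [LinearOrder 𝕜] [IsStrictOrderedRing 𝕜]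
  [AddCommGroup E] [Module 𝕜 E]

theorem eq_or_mem_segment_of_mem_convexHull_insert {s : Set E} {x y : E}
    (hy : y ∈ convexHull 𝕜 (insert x s)) : y = x ∨ ∃ q ∈ convexHull 𝕜 s, y ∈ segment 𝕜 x q := by
  rcases s.eq_empty_or_nonempty with rfl | hs
  · simpa using hy
  · rw [convexHull_insert hs, mem_convexJoin] at hy
    obtain ⟨_, rfl, q, hq, hyq⟩ := hy
    exact Or.inr ⟨q, hq, hyq⟩

theorem notMem_convexHull_insert_sub {s : Set E} {p e : E} (he : e ≠ 0)
    (hray : ∀ t : 𝕜, 0 ≤ t → p + t • e ∉ convexHull 𝕜 s) :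
    p ∉ convexHull 𝕜 (insert (p - e) s) := by
  intro hp
  rcases eq_or_mem_segment_of_mem_convexHull_insert hp with h | ⟨q, hq, hpq⟩
  · exact he (sub_eq_self.1 h.symm)
  · rw [segment_eq_image'] at hpq
    obtain ⟨θ, ⟨hθ0, hθ1⟩, hθ⟩ := hpq
    have hθ0' : θ ≠ 0 := by
      rintro rfl
      exact he (by simpa using hθ)
    have hq' : q = p + ((1 - θ) / θ) • e := by
      linear_combination (norm := skip) θ⁻¹ • hθ
      match_scalars <;> field_simp <;> ring
    exact hray _ (div_nonneg (sub_nonneg.2 hθ1) hθ0) (hq' ▸ hq)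

theorem notMem_convexHull_sdiff_of_mem_extremePoints {A : Set E} {p : E}
    (hp : p ∈ (convexHull 𝕜 A).extremePoints 𝕜) : p ∉ convexHull 𝕜 (A \ {p}) := by
  rw [(convex_convexHull 𝕜 A).mem_extremePoints_iff_convex_sdiff] at hp
  exact fun h => (convexHull_min (sdiff_subset_sdiff_left (subset_convexHull 𝕜 A)) hp.2 h).2 rfl

theorem mem_exposedPoints_convexHull_of_forall_lt [TopologicalSpace 𝕜] [TopologicalSpace E]
    {A : Set E} {p : E} (hp : p ∈ A) (l : StrongDual 𝕜 E)
    (hl : ∀ q ∈ A, q ≠ p → l q < l p) : p ∈ (convexHull 𝕜 A).exposedPoints 𝕜 := by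
  have hle : convexHull 𝕜 A ⊆ {y | l y ≤ l p} :=
    convexHull_min (fun q hq => (eq_or_ne q p).elim (fun h => h ▸ le_rfl) (hl q hq · |>.le))
      (convex_halfSpace_le l.isLinear _)
  have hlt : convexHull 𝕜 (A \ {p}) ⊆ {y | l y < l p} :=
    convexHull_min (fun q hq => hl q hq.1 hq.2) (convex_halfSpace_lt l.isLinear _)
  refine ⟨subset_convexHull 𝕜 A hp, l, fun y hy => ⟨hle hy, fun hpy => ?_⟩⟩
  rcases eq_or_mem_segment_of_mem_convexHull_insert
    (convexHull_mono (subset_insert_sdiff_singleton p A) hy) with h | ⟨q, hq, hyq⟩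
  · exact h
  · rw [segment_eq_image'] at hyq
    obtain ⟨θ, ⟨hθ0, -⟩, rfl⟩ := hyq
    have hlq : l q < l p := hlt hq
    simp only [map_add, map_smul, map_sub, smul_eq_mul] at hpy
    have hθ : θ = 0 := by nlinarith
    simp [hθ]

end Convex

theorem exists_strongDual_pos_forall_lt {E : Type*} [TopologicalSpace E] [AddCommGroup E]
    [Module ℝ E] [IsTopologicalAddGroup E] [ContinuousSMul ℝ E] [LocallyConvexSpace ℝ E]
    [T2Space E] {s : Set E} (hs : s.Finite) {p e : E}
    (hp : p ∉ convexHull ℝ (insert (p - e) s)) :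
    ∃ ψ : StrongDual ℝ E, 0 < ψ e ∧ ∀ q ∈ s, ψ q < ψ p := by
  obtain ⟨ψ, u, hψu, hup⟩ := geometric_hahn_banach_closed_point (convex_convexHull ℝ _)
    ((hs.insert _).isCompact_convexHull ℝ).isClosed hp
  have hsub := subset_convexHull ℝ (insert (p - e) s)
  refine ⟨ψ, ?_, fun q hq => (hψu q (hsub (mem_insert_of_mem _ hq))).trans hup⟩
  have := hψu _ (hsub (mem_insert _ _))
  rw [map_sub] at this
  linarith

section Tropical

variable {F : Type*} [NormedAddCommGroup F] [InnerProductSpace ℝ F]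

noncomputable def tropicalTerm (x : F) : StrongDual ℝ (ℝ × F) :=
  ContinuousLinearMap.fst ℝ ℝ F + (innerSL ℝ x).comp (ContinuousLinearMap.snd ℝ ℝ F)

@[simp]
theorem tropicalTerm_apply (x : F) (q : ℝ × F) : tropicalTerm x q = q.1 + ⟪q.2, x⟫ := by
  simp [tropicalTerm, real_inner_comm]

theorem exists_eq_smul_tropicalTerm [CompleteSpace F] (ψ : StrongDual ℝ (ℝ × F))
    (hψ : ψ (1, 0) ≠ 0) : ∃ x : F, ψ = ψ (1, 0) • tropicalTerm x := by
  refine ⟨(ψ (1, 0))⁻¹ •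
    (InnerProductSpace.toDual ℝ F).symm (ψ.comp (ContinuousLinearMap.inr ℝ ℝ F)), ?_⟩
  ext
  · simp
  · simp [hψ, real_inner_smul_right]
    rw [real_inner_comm, InnerProductSpace.toDual_symm_apply]
    rfl

end Tropical

section UpperHull

variable {n : ℕ}

theorem mem_upperHull_convexHull_of_forall_le {A : Set (ℝ × EuclideanSpace ℝ (Fin n))}
    {p : ℝ × EuclideanSpace ℝ (Fin n)} (hp : p ∈ A) (x : EuclideanSpace ℝ (Fin n))
    (hx : ∀ q ∈ A, tropicalTerm x q ≤ tropicalTerm x p) : p ∈ upperHull (convexHull ℝ A) := by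
  refine ⟨subset_convexHull ℝ A hp, fun t ht => ?_⟩
  have : tropicalTerm x (t, p.2) ≤ tropicalTerm x p :=
    convexHull_min (t := {q | tropicalTerm x q ≤ tropicalTerm x p}) hx
      (convex_halfSpace_le (tropicalTerm x).isLinear _) ht
  simpa using this

theorem add_smul_fst_notMem_of_mem_upperHull {P : Set (ℝ × EuclideanSpace ℝ (Fin n))}
    {p : ℝ × EuclideanSpace ℝ (Fin n)} (hp : p ∈ upperHull P) {t : ℝ} (ht : 0 < t) :
    p + t • ((1 : ℝ), (0 : EuclideanSpace ℝ (Fin n))) ∉ P := fun h => by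
  have := hp.2 (p.1 + t) (by convert h using 1; ext <;> simp)
  linarith

end UpperHull

theorem linear_regions_biject_upper_hull_vertices_general (n m : ℕ)
    (b : Fin m → ℝ) (c : Fin m → EuclideanSpace ℝ (Fin n))
    (hdist : Function.Injective
      (fun i => ((b i, c i) : ℝ × EuclideanSpace ℝ (Fin n))))
    (i : Fin m) :
    (∃ x : EuclideanSpace ℝ (Fin n), ∀ j : Fin m, j ≠ i →
        b j + ⟪c j, x⟫ < b i + ⟪c i, x⟫) ↔
      ((b i, c i) ∈ Set.extremePoints ℝ (convexHull ℝ
          (Set.range fun l => ((b l, c l) : ℝ × EuclideanSpace ℝ (Fin n)))) ∧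
        (b i, c i) ∈ upperHull (convexHull ℝ
          (Set.range fun l => ((b l, c l) : ℝ × EuclideanSpace ℝ (Fin n))))) := by
  set f := fun l => ((b l, c l) : ℝ × EuclideanSpace ℝ (Fin n))
  have hf : ∀ x j, b j + ⟪c j, x⟫ = tropicalTerm x (f j) := fun x j =>
    (tropicalTerm_apply x (f j)).symm
  simp only [hf]
  constructor
  · rintro ⟨x, hx⟩
    have hlt : ∀ q ∈ range f, q ≠ f i → tropicalTerm x q < tropicalTerm x (f i) := by
      rintro _ ⟨j, rfl⟩ hj
      exact hx j (ne_of_apply_ne f hj)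
    refine ⟨exposedPoints_subset_extremePoints
      (mem_exposedPoints_convexHull_of_forall_lt (mem_range_self i) _ hlt),
      mem_upperHull_convexHull_of_forall_le (mem_range_self i) x fun q hq => ?_⟩
    exact (eq_or_ne q (f i)).elim (fun h => h ▸ le_rfl) (hlt q hq · |>.le)
  · rintro ⟨hext, hup⟩
    have hray : ∀ t : ℝ, 0 ≤ t →
        f i + t • ((1 : ℝ), (0 : EuclideanSpace ℝ (Fin n))) ∉ convexHull ℝ (range f \ {f i}) := by
      intro t ht hmem
      rcases ht.eq_or_lt with rfl | ht
      · exact notMem_convexHull_sdiff_of_mem_extremePoints hext (by simpa using hmem)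
      · exact add_smul_fst_notMem_of_mem_upperHull hup ht (convexHull_mono sdiff_subset hmem)
    obtain ⟨ψ, hψ, hψlt⟩ := exists_strongDual_pos_forall_lt (finite_range f).sdiff
      (notMem_convexHull_insert_sub (by simp) hray)
    obtain ⟨x, hx⟩ := exists_eq_smul_tropicalTerm ψ hψ.ne'
    refine ⟨x, fun j hj => ?_⟩
    have := hψlt (f j) ⟨mem_range_self j, fun h => hj (hdist h)⟩
    rw [hx] at this
    exact lt_of_mul_lt_mul_left this hψ.le

/-- For a tropical polynomial `h(x) = max_{i ∈ [m]} (bᵢ + ⟨cᵢ, x⟩)` with pairwise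
distinct points `(bᵢ, cᵢ)`, term `i` defines a linear region of `h` (i.e. is the
unique maximizer at some point `x`) if and only if `(bᵢ, cᵢ)` is a vertex
(extreme point) of the Newton polytope `N(h) = conv{(bᵢ, cᵢ)}` lying on its
upper hull. -/
theorem linear_regions_biject_upper_hull_vertices (n m : ℕ) (hm : 0 < m)
    (b : Fin m → ℝ) (c : Fin m → EuclideanSpace ℝ (Fin n))
    (hdist : Function.Injective
      (fun i => ((b i, c i) : ℝ × EuclideanSpace ℝ (Fin n))))
    (i : Fin m) :
    (∃ x : EuclideanSpace ℝ (Fin n), ∀ j : Fin m, j ≠ i →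
        b j + ⟪c j, x⟫ < b i + ⟪c i, x⟫) ↔
      ((b i, c i) ∈ Set.extremePoints ℝ (convexHull ℝ
          (Set.range fun l => ((b l, c l) : ℝ × EuclideanSpace ℝ (Fin n)))) ∧
        (b i, c i) ∈ upperHull (convexHull ℝ
          (Set.range fun l => ((b l, c l) : ℝ × EuclideanSpace ℝ (Fin n))))) :=
  linear_regions_biject_upper_hull_vertices_general n m b c hdist i
end

section
/- Let S₁, …, S_m ⊂ ℝⁿ be line segments (each S_i = conv{p_i, q_i} with p_i ≠ q_i), and let Z = S₁ ⊕ ⋯ ⊕ S_m be their Minkowski sum (a zonotope). Then the number of vertices (extreme points) of Z is at most 2 Σ_{j=0}^{n−1} C(m−1, j). -/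
/-!
Each summand of an extreme point of a Minkowski sum is extreme, so a vertex `v` of
`Z = ∑ [pᵢ, qᵢ]` is a sum of endpoints `xᵢ`. By Gordan's alternative some linear functional strictly
prefers every `xᵢ` to the other endpoint `yᵢ`: otherwise `∑ wᵢ (xᵢ - yᵢ) = 0` for a probability
vector `w`, and moving each `xᵢ` towards `yᵢ` by `wᵢ / 2` writes `v` with a summand that is not an
endpoint. Hence `v` is determined by a region of the central arrangement of the hyperplanes
`(qᵢ - pᵢ)ᗮ`. Adding a hyperplane `Hᗮ` to an arrangement splits a region in two only if the region
meets `Hᗮ`, i.e. comes from a region of the arrangement projected into `Hᗮ`, one dimension lower.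
This is the Pascal recursion satisfied by `2 ∑_{j<n} C(m-1, j)`.
-/

open scoped Pointwise RealInnerProductSpace
open Module Set

theorem mem_extremePoints_of_sum_mem_extremePoints {𝕜 E ι : Type*} [Ring 𝕜] [PartialOrder 𝕜]
    [IsOrderedRing 𝕜] [AddCommGroup E] [Module 𝕜 E] [Fintype ι] {S : ι → Set E} {x : ι → E}
    (hx : ∀ i, x i ∈ S i) (hsum : ∑ i, x i ∈ (∑ i, S i).extremePoints 𝕜) (i : ι) :
    x i ∈ (S i).extremePoints 𝕜 := by
  classical
  have hmem : ∀ y ∈ S i, ∑ j ∈ Finset.univ.erase i, x j + y ∈ ∑ i, S i := fun y hy => by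
    rw [add_comm, ← Finset.sdiff_singleton_eq_erase,
      ← Finset.sum_update_of_mem (Finset.mem_univ i)]
    refine finsetSum_mem_finsetSum _ _ _ fun j _ => ?_
    rcases eq_or_ne j i with rfl | hj
    · simpa using hy
    · simpa [hj] using hx j
  rw [← Finset.sum_erase_add _ x (Finset.mem_univ i)] at hsum
  refine mem_extremePoints.2 ⟨hx i, fun y hy z hz hxi => ?_⟩
  have h := (mem_extremePoints.1 hsum).2 _ (hmem y hy) _ (hmem z hz)
    ((mem_openSegment_translate 𝕜 _).2 hxi)
  exact ⟨add_left_cancel h.1, add_left_cancel h.2⟩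

theorem exists_nonneg_sum_eq_one_sum_smul_eq_of_mem_convexHull_range {R E ι : Type*} [Field R]
    [LinearOrder R] [IsStrictOrderedRing R] [AddCommGroup E] [Module R E] [Fintype ι] {a : ι → E}
    {x : E} (hx : x ∈ convexHull R (range a)) :
    ∃ w : ι → R, (∀ i, 0 ≤ w i) ∧ ∑ i, w i = 1 ∧ ∑ i, w i • a i = x := by
  classical
  rw [convexHull_range_eq_exists_affineCombination] at hx
  obtain ⟨s, w, hw0, hw1, rfl⟩ := hx
  refine ⟨fun i => if i ∈ s then w i else 0, fun i => ?_, ?_, ?_⟩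
  · dsimp only
    split_ifs with hi
    exacts [hw0 i hi, le_rfl]
  · rw [Finset.sum_ite_mem, Finset.univ_inter, hw1]
  · simp only [ite_smul, zero_smul]
    rw [Finset.sum_ite_mem, Finset.univ_inter,
      Finset.affineCombination_eq_linear_combination s a w hw1]

theorem ncard_le_ncard_snoc_or_add_ncard_snoc_and {m : ℕ} (S : Set (Fin (m + 1) → Bool)) :
    S.ncard ≤ {τ | Fin.snoc τ true ∈ S ∨ Fin.snoc τ false ∈ S}.ncard +
      {τ | Fin.snoc τ true ∈ S ∧ Fin.snoc τ false ∈ S}.ncard := by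
  set A := {τ : Fin m → Bool | Fin.snoc τ true ∈ S}
  set B := {τ : Fin m → Bool | Fin.snoc τ false ∈ S}
  have hS : S ⊆ (Fin.snoc · true) '' A ∪ (Fin.snoc · false) '' B := fun σ hσ => by
    have hσ' : Fin.snoc (Fin.init σ) (σ (Fin.last m)) = σ := Fin.snoc_init_self σ
    cases h : σ (Fin.last m) <;> rw [h] at hσ'
    exacts [Or.inr ⟨_, show Fin.snoc _ false ∈ S by rwa [hσ'], hσ'⟩,
      Or.inl ⟨_, show Fin.snoc _ true ∈ S by rwa [hσ'], hσ'⟩]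
  calc S.ncard ≤ ((Fin.snoc · true) '' A ∪ (Fin.snoc · false) '' B).ncard := ncard_le_ncard hS
    _ ≤ A.ncard + B.ncard := (ncard_union_le _ _).trans (add_le_add ncard_image_le ncard_image_le)
    _ = (A ∪ B).ncard + (A ∩ B).ncard := (ncard_union_add_ncard_inter A B).symm

theorem sum_range_succ_choose_succ (k m : ℕ) :
    ∑ j ∈ Finset.range (k + 1), (m + 1).choose j =
      ∑ j ∈ Finset.range (k + 1), m.choose j + ∑ j ∈ Finset.range k, m.choose j := by
  induction k with
  | zero => simp
  | succ k ih =>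
    rw [Finset.sum_range_succ, ih, Nat.choose_succ_succ', Finset.sum_range_succ _ (k + 1),
      Finset.sum_range_succ _ k]
    ring

theorem one_le_sum_range_choose {n : ℕ} (hn : 0 < n) (m : ℕ) :
    1 ≤ ∑ j ∈ Finset.range n, m.choose j :=
  (Nat.choose_zero_right m).ge.trans <|
    Finset.single_le_sum (f := m.choose) (fun _ _ => Nat.zero_le _) (Finset.mem_range.2 hn)

section

variable {E : Type*} [NormedAddCommGroup E] [InnerProductSpace ℝ E]

theorem exists_forall_inner_pos_of_zero_notMem_convexHull [CompleteSpace E] {ι : Type*}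
    [Finite ι] {a : ι → E} (h : (0 : E) ∉ convexHull ℝ (range a)) :
    ∃ c : E, ∀ i, 0 < ⟪c, a i⟫ := by
  obtain ⟨f, u, hf0, hf⟩ := geometric_hahn_banach_point_closed (convex_convexHull ℝ _)
    ((finite_range a).isClosed_convexHull ℝ) h
  refine ⟨(InnerProductSpace.toDual ℝ E).symm f, fun i => ?_⟩
  rw [map_zero] at hf0
  rw [InnerProductSpace.toDual_symm_apply]
  linarith [hf _ (subset_convexHull ℝ _ (mem_range_self i))]

theorem exists_forall_inner_sub_pos_of_sum_mem_extremePoints [CompleteSpace E] {ι : Type*}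
    [Fintype ι] {x y : ι → E} (hxy : ∀ i, x i ≠ y i)
    (hx : ∑ i, x i ∈ (∑ i, segment ℝ (x i) (y i)).extremePoints ℝ) :
    ∃ c : E, ∀ i, 0 < ⟪c, x i - y i⟫ := by
  refine exists_forall_inner_pos_of_zero_notMem_convexHull fun h0 => ?_
  obtain ⟨w, hw0, hw1, hw⟩ := exists_nonneg_sum_eq_one_sum_smul_eq_of_mem_convexHull_range h0
  obtain ⟨j, -, hj⟩ : ∃ j ∈ Finset.univ, 0 < w j :=
    Finset.exists_lt_of_sum_lt (by simp [hw1] : ∑ _ : ι, (0 : ℝ) < ∑ i, w i)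
  have hw_le : ∀ i, w i ≤ 1 := fun i =>
    hw1 ▸ Finset.single_le_sum (fun i _ => hw0 i) (Finset.mem_univ i)
  set z : ι → E := fun i => x i + (w i / 2) • (y i - x i)
  have hz : ∀ i, z i ∈ segment ℝ (x i) (y i) := fun i => by
    rw [segment_eq_image']
    exact ⟨w i / 2, ⟨by linarith [hw0 i], by linarith [hw_le i]⟩, rfl⟩
  have hzsum : ∑ i, z i = ∑ i, x i := by
    have : ∑ i, (w i / 2) • (y i - x i) = -(1 / 2 : ℝ) • ∑ i, w i • (x i - y i) := by
      rw [Finset.smul_sum]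
      exact Finset.sum_congr rfl fun i _ => by module
    simp only [z, Finset.sum_add_distrib, this, hw, smul_zero, add_zero]
  have hzj := mem_extremePoints_of_sum_mem_extremePoints hz (hzsum ▸ hx) j
  have hopen : z j ∈ openSegment ℝ (x j) (y j) := by
    rw [openSegment_eq_image']
    exact ⟨w j / 2, ⟨by linarith, by linarith [hw_le j]⟩, rfl⟩
  have h := (mem_extremePoints.1 hzj).2 _ (left_mem_segment ℝ _ _) _ (right_mem_segment ℝ _ _) hopen
  exact hxy j (h.1.trans h.2.symm)

/-- The sign vectors of the regions of the central arrangement of the hyperplanes `(d i)ᗮ`;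
`σ i = true` marks the side where `d i` points. -/
def topes {ι : Type*} (d : ι → E) : Set (ι → Bool) :=
  {σ | ∃ c : E, ∀ i, 0 < ⟪c, if σ i then d i else -d i⟫}

theorem topes_eq_empty_of_eq_zero {ι : Type*} {d : ι → E} {i : ι} (h : d i = 0) :
    topes d = ∅ :=
  eq_empty_of_forall_notMem fun _ ⟨c, hc⟩ => by simpa [h] using hc i

theorem extremePoints_sum_segment_subset_image_topes [CompleteSpace E] {ι : Type*} [Fintype ι]
    {p q : ι → E} (hpq : ∀ i, p i ≠ q i) :
    (∑ i, segment ℝ (p i) (q i)).extremePoints ℝ ⊆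
      (fun σ => ∑ i, if σ i then q i else p i) '' topes (q - p) := by
  classical
  intro v hv
  obtain ⟨x, hx, rfl⟩ := (mem_fintype_sum _ _).1 hv.1
  have hend : ∀ i, x i = p i ∨ x i = q i := fun i => by
    have hxi := mem_extremePoints_of_sum_mem_extremePoints hx hv i
    rw [← convexHull_pair] at hxi
    simpa using extremePoints_convexHull_subset hxi
  set σ : ι → Bool := fun i => decide (x i = q i)
  set y : ι → E := fun i => if σ i then p i else q i
  have hx_eq : ∀ i, x i = if σ i then q i else p i := fun i => by
    rcases hend i with h | h <;> simp [σ, h, hpq i]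
  have hxy : ∀ i, x i - y i = if σ i then q i - p i else -(q i - p i) := fun i => by
    rw [hx_eq i]; by_cases h : σ i <;> simp [y, h]
  have hseg : ∑ i, segment ℝ (x i) (y i) = ∑ i, segment ℝ (p i) (q i) :=
    Finset.sum_congr rfl fun i _ => by
      rw [hx_eq i]; by_cases h : σ i <;> simp [y, h, segment_symm]
  obtain ⟨c, hc⟩ := exists_forall_inner_sub_pos_of_sum_mem_extremePoints
    (fun i => by rw [hx_eq i]; by_cases h : σ i <;> simp [y, h, hpq i, (hpq i).symm])
    (hseg ▸ hv)
  exact ⟨σ, ⟨c, fun i => by simpa [hxy i] using hc i⟩,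
    Finset.sum_congr rfl fun i _ => (hx_eq i).symm⟩

theorem ncard_extremePoints_sum_segment_le [CompleteSpace E] {ι : Type*} [Fintype ι]
    {p q : ι → E} (hpq : ∀ i, p i ≠ q i) :
    ((∑ i, segment ℝ (p i) (q i)).extremePoints ℝ).ncard ≤ (topes (q - p)).ncard :=
  (ncard_le_ncard (extremePoints_sum_segment_subset_image_topes hpq)
    ((toFinite _).image _)).trans ncard_image_le

theorem snoc_mem_topes_snoc_iff {m : ℕ} {d : Fin m → E} {v : E} {τ : Fin m → Bool} {b : Bool} :
    Fin.snoc τ b ∈ topes (Fin.snoc d v : Fin (m + 1) → E) ↔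
      ∃ c : E, (∀ i, 0 < ⟪c, if τ i then d i else -d i⟫) ∧ 0 < ⟪c, if b then v else -v⟫ := by
  simp [topes, Fin.forall_fin_succ']

theorem mem_topes_of_snoc_mem_topes_snoc {m : ℕ} {d : Fin m → E} {v : E} {τ : Fin m → Bool}
    {b : Bool} (h : Fin.snoc τ b ∈ topes (Fin.snoc d v : Fin (m + 1) → E)) : τ ∈ topes d := by
  obtain ⟨c, hc, -⟩ := snoc_mem_topes_snoc_iff.1 h
  exact ⟨c, hc⟩

theorem mem_topes_orthogonalProjectionOnto_of_snoc_mem_topes_snoc {m : ℕ} {d : Fin m → E}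
    {v : E} {τ : Fin m → Bool} (ht : Fin.snoc τ true ∈ topes (Fin.snoc d v : Fin (m + 1) → E))
    (hf : Fin.snoc τ false ∈ topes (Fin.snoc d v : Fin (m + 1) → E)) :
    τ ∈ topes fun i => (ℝ ∙ v)ᗮ.orthogonalProjectionOnto (d i) := by
  obtain ⟨c₁, hc₁, hv₁⟩ := snoc_mem_topes_snoc_iff.1 ht
  obtain ⟨c₂, hc₂, hv₂⟩ := snoc_mem_topes_snoc_iff.1 hf
  simp only [if_true, Bool.false_eq_true, if_false, inner_neg_right] at hv₁ hv₂
  -- the positive combination of `c₁` and `c₂` that is orthogonal to `v`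
  set c := (-⟪c₂, v⟫) • c₁ + ⟪c₁, v⟫ • c₂
  have hc : c ∈ (ℝ ∙ v)ᗮ := by
    rw [Submodule.mem_orthogonal_singleton_iff_inner_right, inner_add_right,
      real_inner_smul_right, real_inner_smul_right, real_inner_comm v, real_inner_comm v]
    ring
  refine ⟨⟨c, hc⟩, fun i => ?_⟩
  have hproj : ⟪(⟨c, hc⟩ : (ℝ ∙ v)ᗮ), if τ i then (ℝ ∙ v)ᗮ.orthogonalProjectionOnto (d i)
      else -(ℝ ∙ v)ᗮ.orthogonalProjectionOnto (d i)⟫ = ⟪c, if τ i then d i else -d i⟫ := by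
    split_ifs
    · exact Submodule.inner_orthogonalProjectionOnto_eq_of_mem_left _ _
    · rw [inner_neg_right, inner_neg_right,
        Submodule.inner_orthogonalProjectionOnto_eq_of_mem_left]
  rw [hproj, inner_add_left, real_inner_smul_left, real_inner_smul_left]
  exact add_pos (mul_pos hv₂ (hc₁ i)) (mul_pos hv₁ (hc₂ i))

theorem ncard_topes_le [FiniteDimensional ℝ E] {m : ℕ} (d : Fin (m + 1) → E) :
    (topes d).ncard ≤ 2 * ∑ j ∈ Finset.range (finrank ℝ E), m.choose j := by
  induction m generalizing E with
  | zero =>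
    by_cases h : d 0 = 0
    · simp [topes_eq_empty_of_eq_zero h]
    calc (topes d).ncard ≤ Nat.card (Fin 1 → Bool) := ncard_le_card _
      _ = 2 * 1 := by simp
      _ ≤ _ := Nat.mul_le_mul_left 2 <|
        one_le_sum_range_choose (finrank_pos_iff_exists_ne_zero.2 ⟨_, h⟩) 0
  | succ m ih =>
    obtain ⟨d, v, rfl⟩ : ∃ d' v, d = Fin.snoc d' v :=
      ⟨Fin.init d, d (Fin.last _), (Fin.snoc_init_self d).symm⟩
    by_cases hv : v = 0
    · rw [topes_eq_empty_of_eq_zero (i := Fin.last _) (by simp [hv])]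
      simp
    have hW : finrank ℝ E = finrank ℝ (ℝ ∙ v)ᗮ + 1 := by
      rw [← Submodule.finrank_add_finrank_orthogonal (ℝ ∙ v), finrank_span_singleton hv, add_comm]
    calc (topes (Fin.snoc d v)).ncard
        ≤ (topes d).ncard + (topes fun i => (ℝ ∙ v)ᗮ.orthogonalProjectionOnto (d i)).ncard :=
          (ncard_le_ncard_snoc_or_add_ncard_snoc_and _).trans <| add_le_add
            (ncard_le_ncard fun _ hτ => hτ.elim mem_topes_of_snoc_mem_topes_snoc
              mem_topes_of_snoc_mem_topes_snoc)
            (ncard_le_ncard fun _ hτ =>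
              mem_topes_orthogonalProjectionOnto_of_snoc_mem_topes_snoc hτ.1 hτ.2)
      _ ≤ 2 * ∑ j ∈ Finset.range (finrank ℝ E), m.choose j +
          2 * ∑ j ∈ Finset.range (finrank ℝ (ℝ ∙ v)ᗮ), m.choose j := add_le_add (ih d) (ih _)
      _ = 2 * ∑ j ∈ Finset.range (finrank ℝ E), (m + 1).choose j := by
          rw [hW, sum_range_succ_choose_succ]
          ring

end

/-- A zonotope `Z ⊆ ℝⁿ` (`n ≥ 1`) which is the Minkowski sum of `m` (nondegenerate)
line segments has at most `2 ∑_{j=0}^{n−1} C(m−1, j)` vertices (extreme points). -/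
theorem zonotope_vertex_count_bound (n m : ℕ) (hn : 0 < n)
    (p q : Fin m → EuclideanSpace ℝ (Fin n)) (hpq : ∀ i, p i ≠ q i) :
    (Set.extremePoints ℝ (∑ i : Fin m, segment ℝ (p i) (q i))).ncard ≤
      2 * ∑ j ∈ Finset.range n, Nat.choose (m - 1) j := by
  refine (ncard_extremePoints_sum_segment_le hpq).trans ?_
  rcases m with _ | m
  · calc (topes (q - p)).ncard ≤ Nat.card (Fin 0 → Bool) := ncard_le_card _
      _ ≤ 2 * ∑ j ∈ Finset.range n, Nat.choose (0 - 1) j := by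
        simpa using (one_le_sum_range_choose hn 0).trans (Nat.le_mul_of_pos_left _ two_pos)
  · simpa [finrank_euclideanSpace_fin] using ncard_topes_le (q - p)
end

section
/- Let w₁, …, w_m ∈ ℝⁿ and b₁, …, b_m ∈ ℝ define a ReLU layer with n inputs and m outputs, with unit i computing max(0, ⟨w_i, x⟩ + b_i). Then the number of linear regions of the layer, i.e., the number of strict sign patterns s ∈ {0,1}^m for which there exists x ∈ ℝⁿ with (⟨w_i, x⟩ + b_i > 0 ⟺ s_i = 1) and ⟨w_i, x⟩ + b_i ≠ 0 for all i, is at most min(2^m, Σ_{j=0}^{n} C(m, j)). -/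
/-!
If the active sets of the units shattered a set `t` of more than `n` units, the weights
`wⱼ`, `j ∈ t`, would satisfy a nontrivial linear relation `∑ cⱼ wⱼ = 0`. Then
`∑ cⱼ (⟪wⱼ, x⟫ + bⱼ) = ∑ cⱼ bⱼ` does not depend on `x`, yet it is positive at a point whose
activation pattern on `t` matches the signs of `c`, and negative at one matching the signs
of `-c`. So the family of activation patterns has VC dimension at most `n`, and the
Sauer–Shelah lemma bounds its size by `∑_{j ≤ n} C(m, j)`.
-/

open scoped RealInnerProductSpace
open Finset

lemma sum_mul_pos_of_pos_iff_pos {ι : Type*} {t : Finset ι} {c a : ι → ℝ}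
    (hsign : ∀ j ∈ t, 0 < a j ↔ 0 < c j) (ha : ∀ j ∈ t, a j ≠ 0) (hc : ∃ j ∈ t, c j ≠ 0) :
    0 < ∑ j ∈ t, c j * a j := by
  have hterm : ∀ j ∈ t, c j ≠ 0 → 0 < c j * a j := by
    intro j hj hcj
    rcases hcj.lt_or_gt with hneg | hpos
    · have ha_neg : a j < 0 :=
        (ha j hj).lt_of_le (not_lt.1 fun h => hneg.not_gt ((hsign j hj).1 h))
      exact mul_pos_of_neg_of_neg hneg ha_neg
    · exact mul_pos hpos ((hsign j hj).2 hpos)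
  obtain ⟨j₀, hj₀, hcj₀⟩ := hc
  refine sum_pos' (fun j hj => ?_) ⟨j₀, hj₀, hterm j₀ hj₀ hcj₀⟩
  by_cases hcj : c j = 0
  · simp [hcj]
  · exact (hterm j hj hcj).le

variable {ι E : Type*} [Fintype ι] [NormedAddCommGroup E] [InnerProductSpace ℝ E]

open Classical in
noncomputable def strictActivationPatterns (w : ι → E) (b : ι → ℝ) : Finset (Finset ι) :=
  {u | ∃ x : E, ∀ i, (0 < ⟪w i, x⟫ + b i ↔ i ∈ u) ∧ ⟪w i, x⟫ + b i ≠ 0}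

lemma mem_strictActivationPatterns {w : ι → E} {b : ι → ℝ} {u : Finset ι} :
    u ∈ strictActivationPatterns w b ↔
      ∃ x : E, ∀ i, (0 < ⟪w i, x⟫ + b i ↔ i ∈ u) ∧ ⟪w i, x⟫ + b i ≠ 0 := by
  classical
  simp [strictActivationPatterns]

lemma sum_mul_pos_of_shatters_strictActivationPatterns [DecidableEq ι] {w : ι → E} {b : ι → ℝ}
    {t : Finset ι} (ht : (strictActivationPatterns w b).Shatters t) {c : ι → ℝ}
    (hrel : ∑ j ∈ t, c j • w j = 0) (hc : ∃ j ∈ t, c j ≠ 0) :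
    0 < ∑ j ∈ t, c j * b j := by
  classical
  obtain ⟨u, hu, htu⟩ := ht (filter_subset (fun j => 0 < c j) t)
  obtain ⟨x, hx⟩ := mem_strictActivationPatterns.1 hu
  have hlin : ∑ j ∈ t, c j * ⟪w j, x⟫ = 0 := by
    simp_rw [← real_inner_smul_left, ← sum_inner, hrel, inner_zero_left]
  have hsum : ∑ j ∈ t, c j * b j = ∑ j ∈ t, c j * (⟪w j, x⟫ + b j) := by
    simp_rw [mul_add, sum_add_distrib, hlin, zero_add]
  rw [hsum]
  refine sum_mul_pos_of_pos_iff_pos (fun j hj => ?_) (fun j _ => (hx j).2) hc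
  have hmem : j ∈ t ∩ u ↔ j ∈ t.filter (fun j => 0 < c j) := by rw [htu]
  simpa [(hx j).1, hj] using hmem

lemma card_le_finrank_of_shatters_strictActivationPatterns [DecidableEq ι] [FiniteDimensional ℝ E]
    {w : ι → E} {b : ι → ℝ} {t : Finset ι} (ht : (strictActivationPatterns w b).Shatters t) :
    #t ≤ Module.finrank ℝ E := by
  by_contra hlt
  have hdep : ¬ LinearIndepOn ℝ w (t : Set ι) := fun hli =>
    hlt (by simpa using hli.fintype_card_le_finrank)
  obtain ⟨c, hrel, hc⟩ := not_linearIndepOn_finset_iff.1 hdep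
  have hpos := sum_mul_pos_of_shatters_strictActivationPatterns ht hrel hc
  have hneg := sum_mul_pos_of_shatters_strictActivationPatterns (c := -c) ht
    (by simp [neg_smul, sum_neg_distrib, hrel]) (by simpa using hc)
  simp only [Pi.neg_apply, neg_mul, sum_neg_distrib] at hneg
  linarith

lemma card_strictActivationPatterns_le [DecidableEq ι] [FiniteDimensional ℝ E] (w : ι → E) (b : ι → ℝ) :
    #(strictActivationPatterns w b) ≤
      ∑ k ∈ range (Module.finrank ℝ E + 1), (Fintype.card ι).choose k := by
  have hvc : (strictActivationPatterns w b).vcDim ≤ Module.finrank ℝ E :=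
    Finset.sup_le fun t ht => card_le_finrank_of_shatters_strictActivationPatterns (mem_shatterer.1 ht)
  calc #(strictActivationPatterns w b)
      ≤ #(strictActivationPatterns w b).shatterer := card_le_card_shatterer _
    _ ≤ ∑ k ∈ Iic (strictActivationPatterns w b).vcDim, (Fintype.card ι).choose k :=
        card_shatterer_le_sum_vcDim
    _ ≤ ∑ k ∈ range (Module.finrank ℝ E + 1), (Fintype.card ι).choose k := by
        rw [Nat.range_succ_eq_Iic]
        exact sum_le_sum_of_subset (Iic_subset_Iic.2 hvc)

/-- The number of linear regions of a ReLU layer with `n` inputs and `m`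
outputs, i.e. the number of strict sign patterns `s ∈ {0,1}^m` realized by some
`x ∈ ℝⁿ` with `⟨wᵢ, x⟩ + bᵢ > 0 ⟺ sᵢ = 1` and `⟨wᵢ, x⟩ + bᵢ ≠ 0` for all `i`,
is at most `min(2^m, ∑_{j=0}^{n} C(m, j))`. -/
theorem relu_layer_linear_regions_bound (n m : ℕ)
    (w : Fin m → EuclideanSpace ℝ (Fin n)) (b : Fin m → ℝ) :
    {s : Fin m → Bool | ∃ x : EuclideanSpace ℝ (Fin n), ∀ i : Fin m,
        ((0 < ⟪w i, x⟫ + b i) ↔ s i = true) ∧ ⟪w i, x⟫ + b i ≠ 0}.ncard ≤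
      min (2 ^ m) (∑ j ∈ Finset.range (n + 1), Nat.choose m j) := by
  set S := {s : Fin m → Bool | ∃ x : EuclideanSpace ℝ (Fin n), ∀ i : Fin m,
    ((0 < ⟪w i, x⟫ + b i) ↔ s i = true) ∧ ⟪w i, x⟫ + b i ≠ 0}
  have hactive : S.ncard ≤ #(strictActivationPatterns w b) := by
    rw [← Set.ncard_coe_finset]
    refine Set.ncard_le_ncard_of_injOn (fun s => ({i | s i = true} : Finset (Fin m))) (fun s ⟨x, hx⟩ => ?_)
      (fun s _ s' _ h => funext fun i => Bool.eq_iff_iff.2 ?_)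
    · exact mem_strictActivationPatterns.2 ⟨x, fun i => by simpa using hx i⟩
    · simpa using congrArg (i ∈ ·) h
  refine le_min ((Set.ncard_le_card S).trans (by simp)) (hactive.trans ?_)
  simpa using card_strictActivationPatterns_le w b
end

section
/- Consider a maxout layer with n inputs and m outputs whose units have rank k: unit i computes h_i(x) = max_{j ∈ [k]} (⟨W_{i,j}, x⟩ + b_{i,j}) with W_{i,j} ∈ ℝⁿ, b_{i,j} ∈ ℝ. Then the number of linear regions of the layer, i.e., the number of tuples (j₁, …, j_m) ∈ [k]^m for which there exists x ∈ ℝⁿ such that, for every i, term j_i strictly exceeds all other terms of unit i at x, is at most min(k^m, 2 Σ_{j=0}^{n} C(m·k(k−1)/2, j)). -/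
open scoped RealInnerProductSpace


open Finset in
private lemma pascal_sum (N n : ℕ) :
    ∑ j ∈ range (n+1), Nat.choose N j + ∑ j ∈ range n, Nat.choose N j
      = ∑ j ∈ range (n+1), Nat.choose (N+1) j := by
  induction n with
  | zero => simp
  | succ n ih =>
    rw [sum_range_succ (f := fun j => Nat.choose N j) (n := n+1),
        sum_range_succ (f := fun j => Nat.choose N j) (n := n),
        sum_range_succ (f := fun j => Nat.choose (N+1) j) (n := n+1),
        Nat.choose_succ_succ' N n]
    rw [sum_range_succ (f := fun j => Nat.choose N j) (n := n)] at ih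
    omega

set_option maxHeartbeats 1000000 in
private lemma sign_vec_bound :
    ∀ (N n : ℕ) (E : Type) [AddCommGroup E] [Module ℝ E] [FiniteDimensional ℝ E],
      Module.finrank ℝ E ≤ n → ∀ f : Fin N → (E →ᵃ[ℝ] ℝ),
      {σ : Fin N → Bool | ∃ x : E, ∀ t, if σ t then 0 < f t x else f t x < 0}.ncard
        ≤ ∑ j ∈ Finset.range (n+1), Nat.choose N j := by
  intro N
  induction N with
  | zero =>
    intro n E _ _ _ hdim f
    calc {σ : Fin 0 → Bool | ∃ x : E, ∀ t, if σ t then 0 < f t x else f t x < 0}.ncard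
        ≤ (Set.univ : Set (Fin 0 → Bool)).ncard :=
          Set.ncard_le_ncard (Set.subset_univ _) Set.finite_univ
      _ = 1 := by rw [Set.ncard_univ]; simp [Nat.card_eq_fintype_card]
      _ ≤ ∑ j ∈ Finset.range (n+1), Nat.choose 0 j := by
          have h0 : (0 : ℕ) ∈ Finset.range (n+1) := Finset.mem_range.mpr (Nat.succ_pos n)
          calc (1:ℕ) = Nat.choose 0 0 := rfl
            _ ≤ _ := Finset.single_le_sum (f := fun j => Nat.choose 0 j)
                  (fun i _ => Nat.zero_le _) h0
  | succ N ih =>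
    intro n E _ _ _ hdim f
    classical
    set F := f (Fin.last N) with hF
    set S : Set (Fin (N+1) → Bool) :=
      {σ | ∃ x : E, ∀ t, if σ t then 0 < f t x else f t x < 0} with hSdef
    set res : (Fin (N+1) → Bool) → (Fin N → Bool) := fun σ => σ ∘ Fin.castSucc with hresdef
    set Sp : Set (Fin (N+1) → Bool) := {σ | σ ∈ S ∧ σ (Fin.last N) = true} with hSp
    set Sm : Set (Fin (N+1) → Bool) := {σ | σ ∈ S ∧ σ (Fin.last N) = false} with hSm
    have hSunion : S = Sp ∪ Sm := by
      ext σ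
      simp only [Set.mem_union, hSp, hSm, Set.mem_setOf_eq]
      cases h : σ (Fin.last N) <;> tauto
    have hdisj : Disjoint Sp Sm := by
      rw [Set.disjoint_left]
      rintro σ ⟨_, h1⟩ ⟨_, h2⟩
      rw [h1] at h2; exact Bool.noConfusion h2
    have hinj : ∀ (c : Bool), Set.InjOn res {σ | σ ∈ S ∧ σ (Fin.last N) = c} := by
      intro c σ1 h1 σ2 h2 he
      funext t
      induction t using Fin.lastCases with
      | last => rw [h1.2, h2.2]
      | cast t => exact congrFun he t
    have hcard : S.ncard = (res '' Sp).ncard + (res '' Sm).ncard := by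
      rw [Set.ncard_image_of_injOn (hinj true), Set.ncard_image_of_injOn (hinj false),
        ← Set.ncard_union_eq hdisj (Set.toFinite _) (Set.toFinite _), ← hSunion]
    have hAbound : (res '' Sp ∪ res '' Sm).ncard ≤ ∑ j ∈ Finset.range (n+1), Nat.choose N j := by
      have hsub : res '' Sp ∪ res '' Sm ⊆
          {σ : Fin N → Bool | ∃ x : E, ∀ t,
            if σ t then 0 < f t.castSucc x else f t.castSucc x < 0} := by
        rintro σ' (⟨σ, ⟨⟨x, hx⟩, _⟩, rfl⟩ | ⟨σ, ⟨⟨x, hx⟩, _⟩, rfl⟩) <;>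
          exact ⟨x, fun t => hx t.castSucc⟩
      exact le_trans (Set.ncard_le_ncard hsub (Set.toFinite _)) (ih n E hdim fun t => f t.castSucc)
    have hBbound : (res '' Sp ∩ res '' Sm).ncard ≤ ∑ j ∈ Finset.range n, Nat.choose N j := by
      rcases Set.eq_empty_or_nonempty (res '' Sp ∩ res '' Sm) with he | hne
      · simp [he]
      · obtain ⟨σ0, hσ0⟩ := hne
        obtain ⟨σp, ⟨⟨xp, hxp⟩, hplast⟩, _⟩ := hσ0.1
        obtain ⟨σm, ⟨⟨xm, hxm⟩, hmlast⟩, _⟩ := hσ0.2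
        have hFp : 0 < F xp := by
          have := hxp (Fin.last N); rw [hplast] at this; simpa using this
        have hFm : F xm < 0 := by
          have := hxm (Fin.last N); rw [hmlast] at this; simpa using this
        have hlin : F.linear ≠ 0 := by
          intro h0
          have hv : F xp - F xm = 0 := by
            have h1 := F.linearMap_vsub xp xm
            rw [h0] at h1
            simpa [vsub_eq_sub] using h1.symm
          linarith
        obtain ⟨u, hu⟩ : ∃ u, F.linear u ≠ 0 := by
          by_contra h
          push_neg at h
          exact hlin (LinearMap.ext fun u => by simp [h u])
        have hnontriv : Nontrivial E := nontrivial_of_ne u 0 (by rintro rfl; simp at hu)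
        have hn1 : 1 ≤ n := le_trans Module.finrank_pos hdim
        set K := LinearMap.ker F.linear with hK
        have hrange : 0 < Module.finrank ℝ (LinearMap.range F.linear) := by
          have : Nontrivial (LinearMap.range F.linear) :=
            ⟨⟨F.linear u, LinearMap.mem_range_self _ u⟩, 0, by simp [hu]⟩
          exact Module.finrank_pos
        have hdimK : Module.finrank ℝ K ≤ n - 1 := by
          have h1 := LinearMap.finrank_range_add_finrank_ker F.linear
          rw [hK]
          omega
        set x0 : E := (-(F 0)) • ((F.linear u)⁻¹ • u) with hx0
        have hFx0 : F x0 = 0 := by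
          have h1 := F.linearMap_vsub x0 0
          rw [vsub_eq_sub, sub_zero, vsub_eq_sub] at h1
          have h2 : F.linear x0 = -(F 0) := by
            rw [hx0, map_smul, map_smul, smul_eq_mul, smul_eq_mul,
              inv_mul_cancel₀ hu, mul_one]
          rw [h2] at h1
          linarith [h1]
        set incl : K →ᵃ[ℝ] E :=
          AffineMap.mk' (fun v => x0 + v.val) K.subtype 0
            (fun v => by simp [vsub_eq_sub, vadd_eq_add, add_comm]) with hincl
        set g : Fin N → (K →ᵃ[ℝ] ℝ) := fun t => (f t.castSucc).comp incl with hg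
        have hginc : ∀ (t : Fin N) (v : K), g t v = f t.castSucc (x0 + v.val) := by
          intro t v
          simp [hg, hincl, AffineMap.comp_apply, AffineMap.coe_mk']
        have hsub : res '' Sp ∩ res '' Sm ⊆
            {σ' : Fin N → Bool | ∃ v : K, ∀ t, if σ' t then 0 < g t v else g t v < 0} := by
          rintro σ' ⟨⟨σ1, ⟨⟨x1, hx1⟩, h1last⟩, rfl⟩, σ2, ⟨⟨x2, hx2⟩, h2last⟩, he2⟩
          have hF1 : 0 < F x1 := by
            have := hx1 (Fin.last N); rw [h1last] at this; simpa using this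
          have hF2 : F x2 < 0 := by
            have := hx2 (Fin.last N); rw [h2last] at this; simpa using this
          set θ : ℝ := F x1 / (F x1 - F x2) with hθ
          have hθ0 : 0 < θ := div_pos hF1 (by linarith)
          have hθ1 : θ < 1 := by
            rw [hθ, div_lt_one (by linarith)]; linarith
          set y := AffineMap.lineMap (k := ℝ) x1 x2 θ with hy
          have happ : ∀ (G : E →ᵃ[ℝ] ℝ), G y = θ * (G x2 - G x1) + G x1 := by
            intro G
            rw [hy, AffineMap.apply_lineMap, AffineMap.lineMap_apply]
            simp [vsub_eq_sub, vadd_eq_add, smul_eq_mul]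
          have hFy : F y = 0 := by
            rw [happ F, hθ]
            have hne : F x1 - F x2 ≠ 0 := by linarith
            field_simp
            ring
          have hyK : y - x0 ∈ K := by
            rw [hK, LinearMap.mem_ker]
            have h1 := F.linearMap_vsub y x0
            rw [vsub_eq_sub, vsub_eq_sub] at h1
            rw [h1, hFy, hFx0, sub_zero]
          refine ⟨⟨y - x0, hyK⟩, fun t => ?_⟩
          have hval : g t ⟨y - x0, hyK⟩ = f t.castSucc y := by
            rw [hginc]
            congr 1
            simp
          have h1 := hx1 t.castSucc
          have h2 := hx2 t.castSucc
          have heq : σ2 t.castSucc = σ1 t.castSucc := congrFun he2 t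
          show if σ1 t.castSucc then 0 < g t ⟨y - x0, hyK⟩ else g t ⟨y - x0, hyK⟩ < 0
          rw [hval, happ (f t.castSucc)]
          rw [heq] at h2
          cases hc : σ1 t.castSucc
          · rw [hc] at h1 h2
            simp only [if_false, Bool.false_eq_true] at h1 h2 ⊢
            nlinarith [h1, h2, hθ0, hθ1]
          · rw [hc] at h1 h2
            simp only [if_true] at h1 h2 ⊢
            nlinarith [h1, h2, hθ0, hθ1]
        calc (res '' Sp ∩ res '' Sm).ncard
            ≤ _ := Set.ncard_le_ncard hsub (Set.toFinite _)
          _ ≤ ∑ j ∈ Finset.range ((n-1)+1), Nat.choose N j := ih (n-1) K hdimK g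
          _ = ∑ j ∈ Finset.range n, Nat.choose N j := by rw [Nat.sub_add_cancel hn1]
    calc S.ncard = (res '' Sp).ncard + (res '' Sm).ncard := hcard
      _ = (res '' Sp ∪ res '' Sm).ncard + (res '' Sp ∩ res '' Sm).ncard :=
          (Set.ncard_union_add_ncard_inter _ _ (Set.toFinite _) (Set.toFinite _)).symm
      _ ≤ ∑ j ∈ Finset.range (n+1), Nat.choose N j + ∑ j ∈ Finset.range n, Nat.choose N j :=
          Nat.add_le_add hAbound hBbound
      _ = ∑ j ∈ Finset.range (n+1), Nat.choose (N+1) j := pascal_sum N n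

private lemma dense_ne_zero {n : ℕ} (w : EuclideanSpace ℝ (Fin n)) (c : ℝ)
    (h : ¬ ∀ x : EuclideanSpace ℝ (Fin n), ⟪w, x⟫ + c = 0) :
    Dense {x : EuclideanSpace ℝ (Fin n) | ⟪w, x⟫ + c ≠ 0} := by
  by_cases hw : w = 0
  · have hc : c ≠ 0 := by
      intro h0
      exact h (fun x => by simp [hw, h0, inner_zero_left])
    have : {x : EuclideanSpace ℝ (Fin n) | ⟪w, x⟫ + c ≠ 0} = Set.univ := by
      ext x; simp [hw, inner_zero_left, hc]
    rw [this]; exact dense_univ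
  · intro x
    rw [Metric.mem_closure_iff]
    intro ε hε
    by_cases hx : ⟪w, x⟫ + c ≠ 0
    · exact ⟨x, hx, by simpa using hε⟩
    · push_neg at hx
      have hwn : 0 < ‖w‖ := norm_pos_iff.mpr hw
      refine ⟨x + (ε / (2 * ‖w‖)) • w, ?_, ?_⟩
      · show ⟪w, x + (ε / (2 * ‖w‖)) • w⟫ + c ≠ 0
        rw [inner_add_right, real_inner_smul_right, real_inner_self_eq_norm_sq]
        have : ⟪w, x⟫ + (ε / (2 * ‖w‖)) * ‖w‖ ^ 2 + c
            = (⟪w, x⟫ + c) + (ε / (2 * ‖w‖)) * ‖w‖ ^ 2 := by ring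
        rw [this, hx, zero_add]
        positivity
      · rw [dist_self_add_right, norm_smul]
        have h1 : ‖(ε / (2 * ‖w‖))‖ = ε / (2 * ‖w‖) := by
          rw [Real.norm_eq_abs, abs_of_pos (by positivity)]
        rw [h1]
        rw [div_mul_eq_mul_div, mul_comm (2:ℝ) ‖w‖, ← div_div, mul_div_assoc,
          div_self (ne_of_gt hwn), mul_one]
        linarith

private lemma card_pairs (k : ℕ) :
    Fintype.card {p : Fin k × Fin k // p.1 < p.2} = k * (k - 1) / 2 := by
  have e : {p : Fin k × Fin k // p.1 < p.2} ≃ Σ c : Fin k, Fin c.val :=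
    { toFun := fun p => ⟨p.val.2, ⟨p.val.1.val, p.property⟩⟩
      invFun := fun s => ⟨(⟨s.2.val, lt_trans s.2.isLt s.1.isLt⟩, s.1), s.2.isLt⟩
      left_inv := fun p => rfl
      right_inv := fun s => rfl }
  rw [Fintype.card_congr e, Fintype.card_sigma]
  simp only [Fintype.card_fin]
  rw [Fin.sum_univ_eq_sum_range (fun i => i) k, Finset.sum_range_id]

private noncomputable def affOf {n : ℕ} (w : EuclideanSpace ℝ (Fin n)) (c : ℝ) :
    EuclideanSpace ℝ (Fin n) →ᵃ[ℝ] ℝ :=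
  AffineMap.mk' (fun x => ⟪w, x⟫ + c) (innerSL ℝ w).toLinearMap 0
    (fun p => by simp [vsub_eq_sub, vadd_eq_add])

private lemma affOf_apply {n : ℕ} (w : EuclideanSpace ℝ (Fin n)) (c : ℝ)
    (x : EuclideanSpace ℝ (Fin n)) : affOf w c x = ⟪w, x⟫ + c := by
  rw [affOf, AffineMap.coe_mk']


set_option maxHeartbeats 1000000 in
/-- The number of linear regions of a maxout layer with `n` inputs, `m` outputs
and rank-`k` units `hᵢ(x) = max_{j ∈ [k]} (⟨Wᵢⱼ, x⟩ + bᵢⱼ)`, i.e. the number of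
tuples `(j₁, …, j_m) ∈ [k]^m` such that at some `x` every unit `i` attains its
maximum strictly at term `jᵢ`, is at most
`min(k^m, 2 ∑_{j=0}^{n} C(m·k(k−1)/2, j))`. -/
theorem maxout_layer_linear_regions_bound (n m k : ℕ) (hk : 0 < k)
    (W : Fin m → Fin k → EuclideanSpace ℝ (Fin n)) (b : Fin m → Fin k → ℝ) :
    {J : Fin m → Fin k | ∃ x : EuclideanSpace ℝ (Fin n), ∀ i : Fin m,
        ∀ j : Fin k, j ≠ J i →
          ⟪W i j, x⟫ + b i j < ⟪W i (J i), x⟫ + b i (J i)}.ncard ≤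
      min (k ^ m)
        (2 * ∑ j ∈ Finset.range (n + 1), Nat.choose (m * (k * (k - 1) / 2)) j) := by
  classical
  set S : Set (Fin m → Fin k) := {J : Fin m → Fin k | ∃ x : EuclideanSpace ℝ (Fin n),
    ∀ i : Fin m, ∀ j : Fin k, j ≠ J i →
      ⟪W i j, x⟫ + b i j < ⟪W i (J i), x⟫ + b i (J i)} with hSdef
  refine le_min ?_ ?_
  · calc S.ncard ≤ (Set.univ : Set (Fin m → Fin k)).ncard :=
        Set.ncard_le_ncard (Set.subset_univ _) Set.finite_univ
      _ = k ^ m := by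
        rw [Set.ncard_univ, Nat.card_eq_fintype_card]
        simp
  · set Df : (Fin m × {p : Fin k × Fin k // p.1 < p.2}) → EuclideanSpace ℝ (Fin n) → ℝ :=
      fun t x => ⟪W t.1 t.2.val.1 - W t.1 t.2.val.2, x⟫
        + (b t.1 t.2.val.1 - b t.1 t.2.val.2) with hDfdef
    have hDf : ∀ (t : (Fin m × {p : Fin k × Fin k // p.1 < p.2})) (x : EuclideanSpace ℝ (Fin n)), Df t x =
        (⟪W t.1 t.2.val.1, x⟫ + b t.1 t.2.val.1) -
          (⟪W t.1 t.2.val.2, x⟫ + b t.1 t.2.val.2) := by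
      intro t x
      rw [hDfdef]
      simp only [inner_sub_left]
      ring
    set P : (Fin m × {p : Fin k × Fin k // p.1 < p.2}) → Prop := fun t => ¬ ∀ x, Df t x = 0 with hP
    set NT := Fintype.card {t // P t} with hNT
    set e : Fin NT ≃ {t // P t} := (Fintype.equivFin {t // P t}).symm with he
    set fT : Fin NT → (EuclideanSpace ℝ (Fin n) →ᵃ[ℝ] ℝ) := fun s =>
      affOf (W (e s).val.1 (e s).val.2.val.1 - W (e s).val.1 (e s).val.2.val.2)
        (b (e s).val.1 (e s).val.2.val.1 - b (e s).val.1 (e s).val.2.val.2) with hfT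
    have hfTapp : ∀ (s : Fin NT) (x : EuclideanSpace ℝ (Fin n)), fT s x = Df (e s).val x := by
      intro s x
      rw [hfT, affOf_apply, hDfdef]
    set Sig : Set (Fin NT → Bool) :=
      {σ : Fin NT → Bool | ∃ x : EuclideanSpace ℝ (Fin n), ∀ s,
        if σ s then 0 < fT s x else fT s x < 0} with hSig
    -- perturbation step
    have key : ∀ J ∈ S, ∃ x : EuclideanSpace ℝ (Fin n),
        (∀ i : Fin m, ∀ j : Fin k, j ≠ J i →
          ⟪W i j, x⟫ + b i j < ⟪W i (J i), x⟫ + b i (J i)) ∧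
        (∀ t : {t // P t}, Df t.val x ≠ 0) := by
      intro J hJ
      obtain ⟨x, hx⟩ := hJ
      set U : Set (EuclideanSpace ℝ (Fin n)) := {x' | ∀ i : Fin m, ∀ j : Fin k, j ≠ J i →
        ⟪W i j, x'⟫ + b i j < ⟪W i (J i), x'⟫ + b i (J i)} with hU
      have hUopen : IsOpen U := by
        have hUeq : U = ⋂ q : Fin m × Fin k, {x' | q.2 ≠ J q.1 →
            ⟪W q.1 q.2, x'⟫ + b q.1 q.2 < ⟪W q.1 (J q.1), x'⟫ + b q.1 (J q.1)} := by
          ext x'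
          simp only [hU, Set.mem_iInter, Set.mem_setOf_eq]
          exact ⟨fun h q hq => h q.1 q.2 hq, fun h i j hj => h (i, j) hj⟩
        rw [hUeq]
        refine isOpen_iInter_of_finite fun q => ?_
        by_cases hq : q.2 = J q.1
        · have : {x' : EuclideanSpace ℝ (Fin n) | q.2 ≠ J q.1 →
              ⟪W q.1 q.2, x'⟫ + b q.1 q.2 < ⟪W q.1 (J q.1), x'⟫ + b q.1 (J q.1)} = Set.univ := by
            ext x'; simp [hq]
          rw [this]; exact isOpen_univ
        · have : {x' : EuclideanSpace ℝ (Fin n) | q.2 ≠ J q.1 →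
              ⟪W q.1 q.2, x'⟫ + b q.1 q.2 < ⟪W q.1 (J q.1), x'⟫ + b q.1 (J q.1)} =
              {x' : EuclideanSpace ℝ (Fin n) |
                ⟪W q.1 q.2, x'⟫ + b q.1 q.2 < ⟪W q.1 (J q.1), x'⟫ + b q.1 (J q.1)} := by
            ext x'; simp [hq]
          rw [this]
          exact isOpen_lt
            ((Continuous.inner continuous_const continuous_id).add continuous_const)
            ((Continuous.inner continuous_const continuous_id).add continuous_const)
      have hDense : Dense (⋂ t : {t // P t}, {x' | Df t.val x' ≠ 0}) := by
        refine dense_iInter_of_isOpen (fun t => ?_) (fun t => ?_)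
        · have : {x' | Df t.val x' ≠ 0} = (fun x' => Df t.val x') ⁻¹' ({0}ᶜ) := by
            ext x'; simp
          rw [this]
          refine IsOpen.preimage ?_ isOpen_compl_singleton
          rw [hDfdef]
          exact (Continuous.inner continuous_const continuous_id).add continuous_const
        · exact dense_ne_zero _ _ t.property
      obtain ⟨x', hx'U, hx'D⟩ := hDense.inter_open_nonempty U hUopen ⟨x, hx⟩
      exact ⟨x', hx'U, fun t => Set.mem_iInter.mp hx'D t⟩
    set Φ : (Fin m → Fin k) → (Fin NT → Bool) := fun J =>
      if h : ∃ x : EuclideanSpace ℝ (Fin n),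
        (∀ i : Fin m, ∀ j : Fin k, j ≠ J i →
          ⟪W i j, x⟫ + b i j < ⟪W i (J i), x⟫ + b i (J i)) ∧
        (∀ t : {t // P t}, Df t.val x ≠ 0)
      then fun s => decide (0 < Df (e s).val h.choose) else fun _ => false with hΦ
    have hmaps : ∀ J ∈ S, Φ J ∈ Sig := by
      intro J hJ
      have h := key J hJ
      refine ⟨h.choose, fun s => ?_⟩
      have hs : Φ J s = decide (0 < Df (e s).val h.choose) := by
        simp only [hΦ, dif_pos h]
      have hne : Df (e s).val h.choose ≠ 0 := h.choose_spec.2 (e s)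
      rw [hs, hfTapp]
      simp only [decide_eq_true_eq]
      by_cases hpos : 0 < Df (e s).val h.choose
      · rw [if_pos hpos]; exact hpos
      · rw [if_neg hpos]
        exact (not_lt.mp hpos).lt_of_ne hne
    have hinjon : Set.InjOn Φ S := by
      intro J1 h1 J2 h2 hfe
      by_contra hne
      obtain ⟨i, hi⟩ : ∃ i, J1 i ≠ J2 i := by
        by_contra hc; push_neg at hc; exact hne (funext hc)
      have hq1 := key J1 h1
      have hq2 := key J2 h2
      have hΦ1 : ∀ s, Φ J1 s = decide (0 < Df (e s).val hq1.choose) := by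
        intro s; simp only [hΦ, dif_pos hq1]
      have hΦ2 : ∀ s, Φ J2 s = decide (0 < Df (e s).val hq2.choose) := by
        intro s; simp only [hΦ, dif_pos hq2]
      rcases lt_or_gt_of_ne hi with hlt | hgt
      · set t : (Fin m × {p : Fin k × Fin k // p.1 < p.2}) := (i, ⟨(J1 i, J2 i), hlt⟩) with ht
        have hpos1 : 0 < Df t hq1.choose := by
          rw [hDf, ht]
          have := hq1.choose_spec.1 i (J2 i) hi.symm
          simpa using sub_pos.mpr this
        have hneg2 : Df t hq2.choose < 0 := by
          rw [hDf, ht]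
          have := hq2.choose_spec.1 i (J1 i) hi
          simpa using sub_neg.mpr this
        have hPt : P t := by
          intro hall
          rw [hall] at hpos1
          exact lt_irrefl 0 hpos1
        have hcf := congrFun hfe (e.symm ⟨t, hPt⟩)
        rw [hΦ1, hΦ2, Equiv.apply_symm_apply] at hcf
        have := decide_eq_decide.mp hcf
        exact absurd (this.mp hpos1) (not_lt.mpr hneg2.le)
      · set t : (Fin m × {p : Fin k × Fin k // p.1 < p.2}) := (i, ⟨(J2 i, J1 i), hgt⟩) with ht
        have hneg1 : Df t hq1.choose < 0 := by
          rw [hDf, ht]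
          have := hq1.choose_spec.1 i (J2 i) hi.symm
          simpa using sub_neg.mpr this
        have hpos2 : 0 < Df t hq2.choose := by
          rw [hDf, ht]
          have := hq2.choose_spec.1 i (J1 i) hi
          simpa using sub_pos.mpr this
        have hPt : P t := by
          intro hall
          rw [hall] at hpos2
          exact lt_irrefl 0 hpos2
        have hcf := congrFun hfe (e.symm ⟨t, hPt⟩)
        rw [hΦ1, hΦ2, Equiv.apply_symm_apply] at hcf
        have := decide_eq_decide.mp hcf
        exact absurd (this.mpr hpos2) (not_lt.mpr hneg1.le)
    have hNTle : NT ≤ m * (k * (k - 1) / 2) := by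
      calc NT ≤ Fintype.card (Fin m × {p : Fin k × Fin k // p.1 < p.2}) :=
            Fintype.card_subtype_le P
        _ = m * (k * (k - 1) / 2) := by
            rw [Fintype.card_prod, Fintype.card_fin, card_pairs]
    calc S.ncard ≤ Sig.ncard := Set.ncard_le_ncard_of_injOn Φ hmaps hinjon (Set.toFinite _)
      _ ≤ ∑ j ∈ Finset.range (n+1), Nat.choose NT j :=
          sign_vec_bound NT n (EuclideanSpace ℝ (Fin n))
            (le_of_eq finrank_euclideanSpace_fin) fT
      _ ≤ ∑ j ∈ Finset.range (n+1), Nat.choose (m * (k * (k - 1) / 2)) j :=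
          Finset.sum_le_sum fun j _ => Nat.choose_le_choose j hNTle
      _ ≤ 2 * ∑ j ∈ Finset.range (n+1), Nat.choose (m * (k * (k - 1) / 2)) j :=
          Nat.le_mul_of_pos_left _ (by norm_num)
end
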